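/- Let w ∈ ℤ_{≥0}^{n−1} and z ∈ M. Assume that R_w contains two coprime monomials. Then dim R_{w+z} = dim R_w + dim R_z − 1. -/

import Mathlib

open Finset

def dotp {n : ℕ} (ξ a : Fin n → ℝ) : ℝ := ∑ i, ξ i * a i

def IsNewtonPolyhedron {n : ℕ} (Δ : Set (Fin n → ℝ)) : Prop :=
  ∃ S : Finset (Fin n → ℝ), S.Nonempty ∧ (∀ a ∈ S, ∀ i, ∃ m : ℕ, a i = (m : ℝ)) ∧
    Δ = {x | ∃ y ∈ convexHull ℝ (S : Set (Fin n → ℝ)),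
          ∃ z : Fin n → ℝ, (∀ i, 0 ≤ z i) ∧ x = y + z}

def NPface {n : ℕ} (Δ : Set (Fin n → ℝ)) (ξ : Fin n → ℝ) : Set (Fin n → ℝ) :=
  {a ∈ Δ | ∀ b ∈ Δ, dotp ξ a ≤ dotp ξ b}

def IsFaceOf {n : ℕ} (Δ A : Set (Fin n → ℝ)) : Prop :=
  ∃ ξ : Fin n → ℝ, (∀ i, 0 ≤ ξ i) ∧ A = NPface Δ ξ

noncomputable def npDim {n : ℕ} (A : Set (Fin n → ℝ)) : ℕ :=
  Module.finrank ℝ (vectorSpan ℝ A)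

def IsLooseEdge {n : ℕ} (Δ E : Set (Fin n → ℝ)) : Prop :=
  IsFaceOf Δ E ∧ IsCompact E ∧ npDim E = 1 ∧
    ∀ F, IsFaceOf Δ F → IsCompact F → 2 ≤ npDim F → ¬ E ⊆ F

/-- Weight of an exponent `α` with respect to the vectors `ξ_j`. -/
def wtF {n m : ℕ} (ξ : Fin m → Fin n → ℕ) (α : Fin n →₀ ℕ) : Fin m → ℕ :=
  fun j => ∑ i, ξ j i * α i

/-- `R_w`: the `K`-span of the monomials of weight `w`. -/
noncomputable def Rw (K : Type*) [Field K] {n m : ℕ} (ξ : Fin m → Fin n → ℕ)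
    (w : Fin m → ℕ) : Submodule K (MvPolynomial (Fin n) K) :=
  Submodule.span K {p | ∃ α : Fin n →₀ ℕ, wtF ξ α = w ∧ p = MvPolynomial.monomial α (1 : K)}

/-- The set `M` of admissible weights: `z ∈ M` iff there is `α ∈ ℤⁿ` of weight `z`
pairing nonnegatively with every `ξ ∈ ℝ_{≥0}ⁿ` orthogonal to the direction `c`. -/
def Mset {n m : ℕ} (ξ : Fin m → Fin n → ℕ) (c : Fin n → ℤ) (z : Fin m → ℕ) : Prop :=
  ∃ α : Fin n → ℤ, (∀ j, ∑ i, (ξ j i : ℤ) * α i = (z j : ℤ)) ∧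
    ∀ η : Fin n → ℝ, (∀ i, 0 ≤ η i) → (∑ i, η i * (c i : ℝ)) = 0 →
      0 ≤ ∑ i, η i * (α i : ℝ)

/-- `c` is a primitive lattice vector. -/
def IsPrimitiveVec {n : ℕ} (c : Fin n → ℤ) : Prop :=
  (Finset.univ.gcd fun i => (c i).natAbs) = 1

/-- The segment `E` is parallel to the vector `c`. -/
def ParallelTo {n : ℕ} (E : Set (Fin n → ℝ)) (c : Fin n → ℤ) : Prop :=
  ∃ a b : Fin n → ℝ, a ≠ b ∧ E = segment ℝ a b ∧
    ∃ t : ℝ, (b - a) = t • (fun i => (c i : ℝ))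

/-- `ξ_1, …, ξ_{n-1}` are linearly independent and orthogonal to `c`. -/
def OrthSetup {n m : ℕ} (ξ : Fin m → Fin n → ℕ) (c : Fin n → ℤ) : Prop :=
  LinearIndependent ℝ (fun j => fun i => ((ξ j i : ℝ))) ∧
  ∀ j, ∑ i, (ξ j i : ℤ) * c i = 0

/-- Relatively prime polynomials: no nonconstant (non-unit) common factor. -/
def RelPrime {R : Type*} [CommRing R] (G H : R) : Prop :=
  ∀ d : R, d ∣ G → d ∣ H → IsUnit d

/-!
The monomials of weight `v` are the lattice points `β + k • c` (`k ∈ ℤ`) of the nonnegative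
orthant, where `β` is any integer vector of weight `v`: the integer kernel of the weights is `ℤ c`
because `c` is primitive. The loose edge is a compact face, so its supporting functional is strictly
positive and orthogonal to `c`; hence `c` has entries of both signs and the admissible `k` form an
interval. Two coprime monomials of weight `w` have exponents `t • c⁻` and `t • c⁺`, which gives the
interval `[0, t]`. For `z ∈ M` with witness `α` one gets `[A, B]`, and for `w + z` with witness
`α + t • c⁻` one gets `[A, t + B]`; the cone condition defining `M` gives `A ≤ B + 1`, so
`t + B - A + 1 = (t + 1) + (B - A + 1) - 1`.
-/

open Matrix

theorem Int.nonneg_add_mul_iff_neg_ediv_le {b c k : ℤ} (hc : 0 < c) :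
    0 ≤ b + k * c ↔ -(b / c) ≤ k := by
  rw [neg_le, Int.le_ediv_iff_mul_le hc]
  constructor <;> intro h <;> linarith

theorem Int.nonneg_add_mul_iff_le_ediv_neg {b c k : ℤ} (hc : c < 0) :
    0 ≤ b + k * c ↔ k ≤ b / -c := by
  rw [Int.le_ediv_iff_mul_le (neg_pos.mpr hc)]
  constructor <;> intro h <;> linarith

theorem Int.neg_ediv_le_ediv_add_one {a b c d : ℤ} (hc : 0 < c) (hd : 0 < d)
    (h : 0 ≤ d * a + c * b) : -(a / c) ≤ b / d + 1 := by
  rw [← Int.nonneg_add_mul_iff_neg_ediv_le hc]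
  have hb := Int.lt_ediv_add_one_mul_self b hd
  nlinarith

theorem Matrix.exists_smul_eq_of_mulVec_eq_zero {F m ι : Type*} [Field F] [Fintype m]
    [Fintype ι] {X : Matrix m ι F} (hX : LinearIndependent F X.row)
    (hcard : Fintype.card ι ≤ Fintype.card m + 1) {x y : ι → F} (hx : X *ᵥ x = 0)
    (hy : X *ᵥ y = 0) (hy0 : y ≠ 0) : ∃ r : F, r • y = x := by
  have hker : Module.finrank F (LinearMap.ker X.mulVecLin) ≤ 1 := by
    have := LinearMap.finrank_range_add_finrank_ker X.mulVecLin
    have hrank : X.rank = Fintype.card m := hX.rank_matrix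
    rw [Matrix.rank] at hrank
    simp only [Module.finrank_fintype_fun_eq_card] at this
    omega
  have hspan : LinearMap.ker X.mulVecLin = F ∙ y :=
    (Submodule.eq_of_le_of_finrank_le ((Submodule.span_singleton_le_iff_mem y _).mpr hy)
      (by rwa [finrank_span_singleton hy0])).symm
  exact Submodule.mem_span_singleton.mp (hspan ▸ hx)

namespace IsPrimitiveVec

variable {n : ℕ} {c : Fin n → ℤ}

theorem ne_zero (hc : IsPrimitiveVec c) : c ≠ 0 := by
  rintro rfl
  have : univ.gcd (fun _ : Fin n => (0 : ℕ)) = 0 := Finset.gcd_eq_zero_iff.mpr fun _ _ => rfl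
  simp_all [IsPrimitiveVec]

theorem dvd_of_forall_dvd_mul (hc : IsPrimitiveVec c) {d m : ℤ} (h : ∀ i, d ∣ m * c i) :
    d ∣ m := by
  have : d.natAbs ∣ univ.gcd fun i => m.natAbs * (c i).natAbs :=
    Finset.dvd_gcd fun i _ => by simpa [Int.natAbs_mul] using Int.natAbs_dvd_natAbs.mpr (h i)
  rw [Finset.gcd_mul_left, hc, normalize_eq, mul_one] at this
  exact Int.natAbs_dvd_natAbs.mp this

theorem exists_eq_smul (hc : IsPrimitiveVec c) {v : Fin n → ℤ} {r : ℝ}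
    (hv : ∀ i, (v i : ℝ) = r * c i) : ∃ k : ℤ, v = k • c := by
  obtain ⟨i₀, hi₀⟩ := Function.ne_iff.mp hc.ne_zero
  have hcross : ∀ i, c i₀ * v i = v i₀ * c i := fun i => by
    have : (c i₀ * v i : ℝ) = v i₀ * c i := by rw [hv, hv]; ring
    exact_mod_cast this
  obtain ⟨k, hk⟩ := hc.dvd_of_forall_dvd_mul fun i => ⟨v i, (hcross i).symm⟩
  refine ⟨k, funext fun i => mul_left_cancel₀ hi₀ ?_⟩
  rw [hcross, hk, Pi.smul_apply, smul_eq_mul]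
  ring

end IsPrimitiveVec

def weightMatrix {n m : ℕ} (ξ : Fin m → Fin n → ℕ) : Matrix (Fin m) (Fin n) ℤ :=
  (Matrix.of ξ).map (↑)

theorem weightMatrix_mulVec_natCast {n m : ℕ} (ξ : Fin m → Fin n → ℕ) (α : Fin n →₀ ℕ) :
    weightMatrix ξ *ᵥ (fun i => (α i : ℤ)) = fun j => (wtF ξ α j : ℤ) := by
  funext j
  simp [weightMatrix, mulVec, dotProduct, wtF]

theorem OrthSetup.eq_smul_of_mulVec_eq_zero {n : ℕ} {ξ : Fin (n - 1) → Fin n → ℕ}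
    {c : Fin n → ℤ} (horth : OrthSetup ξ c) (hc : IsPrimitiveVec c) {v : Fin n → ℤ}
    (hv : weightMatrix ξ *ᵥ v = 0) : ∃ k : ℤ, v = k • c := by
  set X : Matrix (Fin (n - 1)) (Fin n) ℝ := (weightMatrix ξ).map (↑)
  have hX : LinearIndependent ℝ X.row := by
    convert horth.1 using 1
    funext j i
    simp [X, weightMatrix, Matrix.row]
  have hker : ∀ u : Fin n → ℤ, weightMatrix ξ *ᵥ u = 0 → X *ᵥ (fun i => (u i : ℝ)) = 0 :=
    fun u hu => funext fun j => by
      have := ((Int.castRingHom ℝ).map_mulVec (weightMatrix ξ) u j).symm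
      simp only [hu, Pi.zero_apply, map_zero] at this
      exact this
  obtain ⟨r, hr⟩ := X.exists_smul_eq_of_mulVec_eq_zero hX
    (by simp only [Fintype.card_fin]; omega) (hker v hv) (hker c (funext horth.2))
    (fun h => hc.ne_zero (funext fun i => by simpa using congrFun h i))
  exact hc.exists_eq_smul fun i => by simpa using (congrFun hr i).symm

theorem finrank_span_monomial_image (K : Type*) [Field K] {σ : Type*}
    (F : Finset (σ →₀ ℕ)) :
    Module.finrank K (Submodule.span K
      ((fun α => MvPolynomial.monomial α (1 : K)) '' (F : Set (σ →₀ ℕ)))) = F.card := by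
  have hli : LinearIndependent K fun α : F => MvPolynomial.monomial (α : σ →₀ ℕ) (1 : K) :=
    (MvPolynomial.basisMonomials σ K).linearIndependent.comp (Subtype.val : F → σ →₀ ℕ)
      Subtype.val_injective
  rw [Set.image_eq_range]
  exact (finrank_span_eq_card hli).trans (Fintype.card_coe F)

def nonnegShifts {n : ℕ} (c β : Fin n → ℤ) : Set ℤ := {k | 0 ≤ β + k • c}

/-- Only meaningful on nonnegative vectors: negative entries are truncated to `0`. -/
noncomputable def toExponent {n : ℕ} (g : Fin n → ℤ) : Fin n →₀ ℕ :=
  Finsupp.equivFunOnFinite.symm fun i => (g i).toNat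

theorem natCast_toExponent {n : ℕ} {g : Fin n → ℤ} (hg : 0 ≤ g) :
    (fun i => (toExponent g i : ℤ)) = g :=
  funext fun i => Int.toNat_of_nonneg (hg i)

section Shifts

variable {n m : ℕ} {ξ : Fin m → Fin n → ℕ} {c β : Fin n → ℤ} {v : Fin m → ℕ}

theorem wtF_eq_iff_mulVec {α : Fin n →₀ ℕ} :
    wtF ξ α = v ↔ weightMatrix ξ *ᵥ (fun i => (α i : ℤ)) = fun j => (v j : ℤ) := by
  rw [weightMatrix_mulVec_natCast, funext_iff, funext_iff]
  simp only [Nat.cast_inj]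

theorem wtF_eq_iff_exists_mem_nonnegShifts
    (hker : ∀ u, weightMatrix ξ *ᵥ u = 0 → ∃ k : ℤ, u = k • c) (hc : weightMatrix ξ *ᵥ c = 0)
    (hβ : weightMatrix ξ *ᵥ β = fun j => (v j : ℤ)) (α : Fin n →₀ ℕ) :
    wtF ξ α = v ↔ ∃ k ∈ nonnegShifts c β, α = toExponent (β + k • c) := by
  rw [wtF_eq_iff_mulVec]
  constructor
  · intro hα
    obtain ⟨k, hk⟩ := hker ((fun i => (α i : ℤ)) - β) (by rw [mulVec_sub, hα, hβ, sub_self])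
    have hαk : (fun i => (α i : ℤ)) = β + k • c := by rw [← hk]; abel
    refine ⟨k, ?_, ?_⟩
    · rw [nonnegShifts, Set.mem_ofPred_eq, ← hαk]
      exact fun i => Int.natCast_nonneg _
    · ext i
      have := congrFun hαk i
      simp only [Pi.add_apply, Pi.smul_apply, smul_eq_mul] at this
      simp [toExponent]
      omega
  · rintro ⟨k, hk, rfl⟩
    rw [natCast_toExponent hk, mulVec_add, mulVec_smul, hc, hβ, smul_zero, add_zero]

theorem finrank_Rw_eq_card (K : Type*) [Field K] (F : Finset (Fin n →₀ ℕ))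
    (hF : ∀ α, α ∈ F ↔ wtF ξ α = v) : Module.finrank K (Rw K ξ v) = F.card := by
  have hset : {p | ∃ α, wtF ξ α = v ∧ p = MvPolynomial.monomial α (1 : K)} =
      (fun α => MvPolynomial.monomial α (1 : K)) '' (F : Set (Fin n →₀ ℕ)) := by
    ext p
    simp [hF, eq_comm]
  rw [Rw, hset, finrank_span_monomial_image]

theorem finrank_Rw_eq_of_nonnegShifts_eq_Icc (K : Type*) [Field K]
    (hker : ∀ u, weightMatrix ξ *ᵥ u = 0 → ∃ k : ℤ, u = k • c) (hc : weightMatrix ξ *ᵥ c = 0)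
    (hc0 : c ≠ 0) (hβ : weightMatrix ξ *ᵥ β = fun j => (v j : ℤ)) {lo hi : ℤ}
    (hI : nonnegShifts c β = Set.Icc lo hi) :
    Module.finrank K (Rw K ξ v) = (hi + 1 - lo).toNat := by
  classical
  rw [finrank_Rw_eq_card K ((Finset.Icc lo hi).image fun k => toExponent (β + k • c)),
    Finset.card_image_of_injOn, Int.card_Icc]
  · intro k hk k' hk' h
    have hk : k ∈ nonnegShifts c β := by simpa [hI] using hk
    have hk' : k' ∈ nonnegShifts c β := by simpa [hI] using hk'
    have := congrArg (fun α : Fin n →₀ ℕ => fun i => (α i : ℤ)) h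
    simp only [natCast_toExponent hk, natCast_toExponent hk', add_right_inj] at this
    exact smul_left_injective ℤ hc0 this
  · intro α
    rw [wtF_eq_iff_exists_mem_nonnegShifts hker hc hβ, hI]
    simp [eq_comm]

theorem mem_nonnegShifts_add_smul_negPart_iff (h0 : ∀ i, c i = 0 → 0 ≤ β i) (t k : ℤ) :
    k ∈ nonnegShifts c (β + t • c⁻) ↔
      (∀ i, 0 < c i → -(β i / c i) ≤ k) ∧ (∀ i, c i < 0 → k - t ≤ β i / -c i) := by
  simp only [nonnegShifts, Set.mem_ofPred_eq, Pi.le_def, ← forall_and]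
  refine forall_congr' fun i => ?_
  simp only [Pi.zero_apply, Pi.add_apply, Pi.smul_apply, Pi.negPart_apply, smul_eq_mul]
  rcases lt_trichotomy (c i) 0 with hci | hci | hci
  · rw [negPart_of_nonpos hci.le, ← Int.nonneg_add_mul_iff_le_ediv_neg hci]
    simp only [hci, hci.not_gt, false_imp_iff, true_imp_iff, true_and]
    constructor <;> intro h <;> linarith
  · simp [hci, h0 i hci]
  · rw [negPart_of_nonneg hci.le, ← Int.nonneg_add_mul_iff_neg_ediv_le hci]
    simp [hci, hci.not_gt]

theorem nonnegShifts_smul_negPart (hP : ∃ i, 0 < c i) (hN : ∃ i, c i < 0) (t : ℤ) :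
    nonnegShifts c (t • c⁻) = Set.Icc 0 t := by
  ext k
  have := mem_nonnegShifts_add_smul_negPart_iff (c := c) (β := 0) (fun _ _ => le_rfl) t k
  simp only [zero_add, Pi.zero_apply, Int.zero_ediv, neg_zero] at this
  obtain ⟨i, hi⟩ := hP
  obtain ⟨j, hj⟩ := hN
  rw [this, Set.mem_Icc]
  exact ⟨fun h => ⟨h.1 i hi, by linarith [h.2 j hj]⟩,
    fun h => ⟨fun _ _ => h.1, fun _ _ => by linarith⟩⟩

theorem exists_nonnegShifts_add_smul_negPart_eq_Icc (hP : ∃ i, 0 < c i) (hN : ∃ i, c i < 0)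
    (h0 : ∀ i, c i = 0 → 0 ≤ β i)
    (hpair : ∀ i j, 0 < c i → c j < 0 → 0 ≤ -c j * β i + c i * β j) :
    ∃ A B : ℤ, A ≤ B + 1 ∧ ∀ t, nonnegShifts c (β + t • c⁻) = Set.Icc A (t + B) := by
  classical
  have hP' : (univ.filter (0 < c ·)).Nonempty := by simpa [Finset.Nonempty] using hP
  have hN' : (univ.filter (c · < 0)).Nonempty := by simpa [Finset.Nonempty] using hN
  refine ⟨(univ.filter (0 < c ·)).sup' hP' fun i => -(β i / c i),
    (univ.filter (c · < 0)).inf' hN' fun i => β i / -c i, ?_, fun t => ?_⟩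
  · rw [Finset.sup'_le_iff]
    intro i hi
    rw [← sub_le_iff_le_add, Finset.le_inf'_iff]
    intro j hj
    simp only [Finset.mem_filter, Finset.mem_univ, true_and] at hi hj
    linarith [Int.neg_ediv_le_ediv_add_one hi (neg_pos.mpr hj) (hpair i j hi hj)]
  · ext k
    rw [mem_nonnegShifts_add_smul_negPart_iff h0, Set.mem_Icc, Finset.sup'_le_iff,
      ← sub_le_iff_le_add', Finset.le_inf'_iff]
    simp

end Shifts

theorem Mset.exists_weight_nonneg {n m : ℕ} {ξ : Fin m → Fin n → ℕ} {c : Fin n → ℤ}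
    {z : Fin m → ℕ} (hz : Mset ξ c z) :
    ∃ α : Fin n → ℤ, weightMatrix ξ *ᵥ α = (fun j => (z j : ℤ)) ∧
      (∀ i, c i = 0 → 0 ≤ α i) ∧ ∀ i j, 0 < c i → c j < 0 → 0 ≤ -c j * α i + c i * α j := by
  obtain ⟨α, hαz, hM⟩ := hz
  set c' : Fin n → ℝ := fun i => c i
  set α' : Fin n → ℝ := fun i => α i
  replace hM : ∀ η, 0 ≤ η → η ⬝ᵥ c' = 0 → 0 ≤ η ⬝ᵥ α' := fun η hη => hM η hη
  refine ⟨α, funext hαz, fun i hi => ?_, fun i j hi hj => ?_⟩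
  · have := hM (Pi.single i 1) (Pi.single_nonneg.mpr zero_le_one) (by simp [c', hi])
    simpa [α'] using this
  · have := hM (Pi.single i (-c j : ℝ) + Pi.single j (c i : ℝ))
      (add_nonneg (Pi.single_nonneg.mpr (by exact_mod_cast (neg_pos.mpr hj).le))
        (Pi.single_nonneg.mpr (by exact_mod_cast hi.le)))
      (by simp only [add_dotProduct, single_dotProduct, c']; ring)
    simp only [add_dotProduct, single_dotProduct, α'] at this
    exact_mod_cast this

theorem natCast_eq_smul_negPart_of_sub_eq_smul {n : ℕ} {c : Fin n → ℤ} {a b : Fin n →₀ ℕ}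
    {t : ℤ} (ht : 0 ≤ t) (hd : (fun i => (b i : ℤ)) - (fun i => (a i : ℤ)) = t • c)
    (hmin : ∀ i, min (a i) (b i) = 0) : (fun i => (a i : ℤ)) = t • c⁻ := by
  funext i
  have hdi : (b i : ℤ) - a i = t * c i := by simpa using congrFun hd i
  have hmi := hmin i
  simp only [Pi.smul_apply, Pi.negPart_apply, smul_eq_mul]
  rcases le_total 0 (c i) with hci | hci
  · rw [negPart_of_nonneg hci, mul_zero]
    have := mul_nonneg ht hci
    omega
  · rw [negPart_of_nonpos hci]
    have := mul_nonpos_of_nonneg_of_nonpos ht hci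
    have : t * -c i = -(t * c i) := by ring
    omega

theorem exists_natCast_eq_smul_negPart {n m : ℕ} {ξ : Fin m → Fin n → ℕ} {c : Fin n → ℤ}
    (hker : ∀ u, weightMatrix ξ *ᵥ u = 0 → ∃ k : ℤ, u = k • c) {a b : Fin n →₀ ℕ}
    (hab : wtF ξ a = wtF ξ b) (hmin : ∀ i, min (a i) (b i) = 0) :
    ∃ (e : Fin n →₀ ℕ) (t : ℤ), 0 ≤ t ∧ wtF ξ e = wtF ξ a ∧ (fun i => (e i : ℤ)) = t • c⁻ := by
  obtain ⟨t, ht⟩ := hker ((fun i => (b i : ℤ)) - fun i => (a i : ℤ))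
    (by rw [mulVec_sub, weightMatrix_mulVec_natCast, weightMatrix_mulVec_natCast, hab, sub_self])
  rcases le_total 0 t with ht0 | ht0
  · exact ⟨a, t, ht0, rfl, natCast_eq_smul_negPart_of_sub_eq_smul ht0 ht hmin⟩
  · refine ⟨b, -t, neg_nonneg.mpr ht0, hab.symm,
      natCast_eq_smul_negPart_of_sub_eq_smul (neg_nonneg.mpr ht0) ?_
        fun i => min_comm (a i) (b i) ▸ hmin i⟩
    rw [neg_smul, ← ht, neg_sub]

section NewtonPolyhedron

variable {n : ℕ} {Δ : Set (Fin n → ℝ)}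

theorem dotp_eq_dotProduct (η a : Fin n → ℝ) : dotp η a = η ⬝ᵥ a := rfl

theorem IsNewtonPolyhedron.add_mem (hΔ : IsNewtonPolyhedron Δ) {x y : Fin n → ℝ} (hx : x ∈ Δ)
    (hy : 0 ≤ y) : x + y ∈ Δ := by
  obtain ⟨S, -, -, rfl⟩ := hΔ
  obtain ⟨p, hp, q, hq, rfl⟩ := hx
  exact ⟨p, hp, q + y, fun i => add_nonneg (hq i) (hy i), add_assoc p q y⟩

theorem IsNewtonPolyhedron.pos_of_isCompact_NPface (hΔ : IsNewtonPolyhedron Δ) {η : Fin n → ℝ}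
    (hη : 0 ≤ η) (hcpt : IsCompact (NPface Δ η)) (hne : (NPface Δ η).Nonempty) (i : Fin n) :
    0 < η i := by
  refine (hη i).lt_of_ne fun hηi => ?_
  obtain ⟨x, hxΔ, hxmin⟩ := hne
  have hray : ∀ s : ℝ, 0 ≤ s → x + Pi.single i s ∈ NPface Δ η := fun s hs =>
    ⟨hΔ.add_mem hxΔ (Pi.single_nonneg.mpr hs), fun b hb => by
      simpa [dotp_eq_dotProduct, dotProduct_add, ← hηi] using hxmin b hb⟩
  obtain ⟨M, hM⟩ := (hcpt.image (continuous_apply i)).bddAbove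
  have := hM ⟨_, hray (|M - x i| + 1) (by positivity), rfl⟩
  simp only [Pi.add_apply, Pi.single_eq_same] at this
  linarith [le_abs_self (M - x i)]

theorem dotProduct_eq_zero_of_parallelTo {η : Fin n → ℝ} {c : Fin n → ℤ}
    (hpar : ParallelTo (NPface Δ η) c) : η ⬝ᵥ (fun i => (c i : ℝ)) = 0 := by
  obtain ⟨a, b, hab, hseg, r, hr⟩ := hpar
  obtain ⟨haΔ, hamin⟩ : a ∈ NPface Δ η := hseg ▸ left_mem_segment ℝ a b
  obtain ⟨hbΔ, hbmin⟩ : b ∈ NPface Δ η := hseg ▸ right_mem_segment ℝ a b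
  have hr0 : r ≠ 0 := by
    rintro rfl
    exact hab (sub_eq_zero.mp (by simpa using hr)).symm
  have : r * (η ⬝ᵥ fun i => (c i : ℝ)) = 0 := by
    rw [← smul_eq_mul, ← dotProduct_smul, ← hr, dotProduct_sub, ← dotp_eq_dotProduct,
      ← dotp_eq_dotProduct, le_antisymm (hbmin a haΔ) (hamin b hbΔ), sub_self]
  exact (mul_eq_zero.mp this).resolve_left hr0

end NewtonPolyhedron

theorem exists_pos_and_exists_neg_of_dotProduct_eq_zero {n : ℕ} {η : Fin n → ℝ}
    (hη : ∀ i, 0 < η i) {c : Fin n → ℤ} (hc : c ≠ 0) (h : η ⬝ᵥ (fun i => (c i : ℝ)) = 0) :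
    (∃ i, 0 < c i) ∧ ∃ i, c i < 0 := by
  have hzero : ∀ d : Fin n → ℤ, 0 ≤ d → η ⬝ᵥ (fun i => (d i : ℝ)) = 0 → d = 0 := by
    intro d hd hsum
    funext i
    have := (Finset.sum_eq_zero_iff_of_nonneg fun i _ =>
      mul_nonneg (hη i).le (by exact_mod_cast hd i)).mp hsum i (mem_univ i)
    simpa [(hη i).ne'] using this
  constructor
  · by_contra! hP
    exact hc (neg_eq_zero.mp (hzero (-c) (fun i => neg_nonneg.mpr (hP i))
      (by simpa [dotProduct] using h)))
  · by_contra! hN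
    exact hc (hzero c hN h)

theorem IsLooseEdge.exists_pos_and_exists_neg {n : ℕ} {Δ E : Set (Fin n → ℝ)}
    (hΔ : IsNewtonPolyhedron Δ) (hE : IsLooseEdge Δ E) {c : Fin n → ℤ} (hpar : ParallelTo E c)
    (hc : c ≠ 0) : (∃ i, 0 < c i) ∧ ∃ i, c i < 0 := by
  obtain ⟨⟨η, hη, rfl⟩, hcpt, -⟩ := hE
  have hne : (NPface Δ η).Nonempty := by
    obtain ⟨a, b, -, hseg, -⟩ := hpar
    exact ⟨a, hseg ▸ left_mem_segment ℝ a b⟩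
  exact exists_pos_and_exists_neg_of_dotProduct_eq_zero
    (hΔ.pos_of_isCompact_NPface hη hcpt hne) hc (dotProduct_eq_zero_of_parallelTo hpar)

theorem finrank_Rw_add_of_natCast_eq_smul_negPart (K : Type*) [Field K] {n m : ℕ}
    {ξ : Fin m → Fin n → ℕ} {c : Fin n → ℤ}
    (hker : ∀ u, weightMatrix ξ *ᵥ u = 0 → ∃ k : ℤ, u = k • c) (hc : weightMatrix ξ *ᵥ c = 0)
    (hP : ∃ i, 0 < c i) (hN : ∃ i, c i < 0) {a : Fin n →₀ ℕ} {t : ℤ} (ht : 0 ≤ t)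
    (ha : (fun i => (a i : ℤ)) = t • c⁻) {z : Fin m → ℕ} {α : Fin n → ℤ}
    (hα : weightMatrix ξ *ᵥ α = fun j => (z j : ℤ)) (h0 : ∀ i, c i = 0 → 0 ≤ α i)
    (hpair : ∀ i j, 0 < c i → c j < 0 → 0 ≤ -c j * α i + c i * α j) :
    Module.finrank K (Rw K ξ (wtF ξ a + z)) =
      Module.finrank K (Rw K ξ (wtF ξ a)) + Module.finrank K (Rw K ξ z) - 1 := by
  have hc0 : c ≠ 0 := fun h => by simp [h] at hP
  have hwa : weightMatrix ξ *ᵥ (t • c⁻) = fun j => (wtF ξ a j : ℤ) := by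
    rw [← ha, weightMatrix_mulVec_natCast]
  obtain ⟨A, B, hAB, hI⟩ := exists_nonnegShifts_add_smul_negPart_eq_Icc hP hN h0 hpair
  have hw := finrank_Rw_eq_of_nonnegShifts_eq_Icc K hker hc hc0 hwa
    (nonnegShifts_smul_negPart hP hN t)
  have hz := finrank_Rw_eq_of_nonnegShifts_eq_Icc K hker hc hc0 hα
    (by simpa using hI 0)
  have hwz := finrank_Rw_eq_of_nonnegShifts_eq_Icc K hker hc hc0
    (v := wtF ξ a + z) (by rw [mulVec_add, hα, hwa]; funext j; simp [add_comm]) (hI t)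
  rw [hw, hz, hwz]
  omega

/-- if `R_w` contains two coprime monomials and `z ∈ M`, then
`dim R_{w+z} = dim R_w + dim R_z - 1`. -/
theorem dim_Rw_add (K : Type*) [Field K] {n : ℕ} (Δ E : Set (Fin n → ℝ))
    (hΔ : IsNewtonPolyhedron Δ) (hE : IsLooseEdge Δ E)
    (c : Fin n → ℤ) (hprim : IsPrimitiveVec c) (hpar : ParallelTo E c)
    (ξ : Fin (n-1) → Fin n → ℕ) (horth : OrthSetup ξ c)
    (w z : Fin (n-1) → ℕ) (hz : Mset ξ c z)
    (hcop : ∃ a b : Fin n →₀ ℕ, a ≠ b ∧ wtF ξ a = w ∧ wtF ξ b = w ∧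
      (∀ i, min (a i) (b i) = 0)) :
    Module.finrank K (Rw K ξ (w + z)) =
      Module.finrank K (Rw K ξ w) + Module.finrank K (Rw K ξ z) - 1 := by
  have hker : ∀ u, weightMatrix ξ *ᵥ u = 0 → ∃ k : ℤ, u = k • c :=
    fun _ => horth.eq_smul_of_mulVec_eq_zero hprim
  obtain ⟨hP, hN⟩ := hE.exists_pos_and_exists_neg hΔ hpar hprim.ne_zero
  obtain ⟨α, hα, h0, hpair⟩ := hz.exists_weight_nonneg
  obtain ⟨a, b, -, haw, hbw, hmin⟩ := hcop
  obtain ⟨e, t, ht, hew, he⟩ := exists_natCast_eq_smul_negPart hker (haw.trans hbw.symm) hmin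
  rw [← hew.trans haw]
  exact finrank_Rw_add_of_natCast_eq_smul_negPart K hker (funext horth.2) hP hN ht he hα h0 hpair
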